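/- Let Q be an IPC formula and let (Z_N, …, Z_0) be a finite nonempty sequence of IPC formulas. Then C(Z_N, …, Z_0) ⊢ QZ_0 ∨ ⋯ ∨ QZ_N; that is, the left-associated disjunction QZ_0 ∨ QZ_1 ∨ ⋯ ∨ QZ_N is deducible in IPC from the single hypothesis C(Z_N, …, Z_0) = Z_N ⊃ (⋯(Z_0 ⊃ Q)⋯). -/
import Mathlib


/-- Formulas of the Implicational Propositional Calculus: propositional
variables and implication. -/
inductive IPCFormula : Type where
  | var : ℕ → IPCFormula
  | imp : IPCFormula → IPCFormula → IPCFormula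

infixr:60 " ⊃' " => IPCFormula.imp

/-- Derivability from a set of hypotheses Γ in the Hilbert system with
axiom schemes IPC1, IPC2, Peirce and the rule modus ponens. -/
inductive IPCDeriv : Set IPCFormula → IPCFormula → Prop where
  | hyp {Γ : Set IPCFormula} {X : IPCFormula} : X ∈ Γ → IPCDeriv Γ X
  | ipc1 {Γ : Set IPCFormula} (X Y : IPCFormula) :
      IPCDeriv Γ (X ⊃' (Y ⊃' X))
  | ipc2 {Γ : Set IPCFormula} (X Y Z : IPCFormula) :
      IPCDeriv Γ ((X ⊃' (Y ⊃' Z)) ⊃' ((X ⊃' Y) ⊃' (X ⊃' Z)))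
  | peirce {Γ : Set IPCFormula} (X Y : IPCFormula) :
      IPCDeriv Γ (((X ⊃' Y) ⊃' X) ⊃' X)
  | mp {Γ : Set IPCFormula} {X Y : IPCFormula} :
      IPCDeriv Γ (X ⊃' Y) → IPCDeriv Γ X → IPCDeriv Γ Y

/-- A theorem of IPC: derivable from no hypotheses. -/
def IPCThm (X : IPCFormula) : Prop := IPCDeriv ∅ X

/-- Disjunction defined within IPC: X ∨ Y := (X ⊃ Y) ⊃ Y. -/
def IPCFormula.disj (X Y : IPCFormula) : IPCFormula := (X ⊃' Y) ⊃' Y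

/-- For a sequence (Z_N, …, Z_0) of IPC formulas (given as Z : ℕ → IPCFormula),
C(Z_N, …, Z_0) := Z_N ⊃ (Z_{N−1} ⊃ (⋯(Z_0 ⊃ Q)⋯)). -/
def IPCC (Q : IPCFormula) (Z : ℕ → IPCFormula) : ℕ → IPCFormula
  | 0 => Z 0 ⊃' Q
  | n + 1 => Z (n + 1) ⊃' IPCC Q Z n

/-- The left-associated disjunction QZ_0 ∨ QZ_1 ∨ ⋯ ∨ QZ_N:
D_0 = QZ_0 and D_{n+1} = D_n ∨ QZ_{n+1}. -/
def IPCD (Q : IPCFormula) (Z : ℕ → IPCFormula) : ℕ → IPCFormula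
  | 0 => Z 0 ⊃' Q
  | n + 1 => IPCFormula.disj (IPCD Q Z n) (Z (n + 1) ⊃' Q)


theorem IPCDeriv.weaken {Γ Δ : Set IPCFormula} {X : IPCFormula}
    (hs : Γ ⊆ Δ) (h : IPCDeriv Γ X) : IPCDeriv Δ X := by
  induction h with
  | hyp hx => exact IPCDeriv.hyp (hs hx)
  | ipc1 X Y => exact IPCDeriv.ipc1 X Y
  | ipc2 X Y Z => exact IPCDeriv.ipc2 X Y Z
  | peirce X Y => exact IPCDeriv.peirce X Y
  | mp _ _ ih1 ih2 => exact IPCDeriv.mp ih1 ih2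

theorem IPCDeriv.id (Γ : Set IPCFormula) (X : IPCFormula) :
    IPCDeriv Γ (X ⊃' X) :=
  IPCDeriv.mp (IPCDeriv.mp (IPCDeriv.ipc2 X (X ⊃' X) X) (IPCDeriv.ipc1 X (X ⊃' X)))
    (IPCDeriv.ipc1 X X)

theorem IPCDeriv.ded {Γ : Set IPCFormula} {A X : IPCFormula}
    (h : IPCDeriv (insert A Γ) X) : IPCDeriv Γ (A ⊃' X) := by
  induction h with
  | @hyp X hx =>
    rcases hx with h | h
    · subst h; exact IPCDeriv.id _ _
    · exact IPCDeriv.mp (IPCDeriv.ipc1 X A) (IPCDeriv.hyp h)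
  | ipc1 X Y => exact IPCDeriv.mp (IPCDeriv.ipc1 _ A) (IPCDeriv.ipc1 X Y)
  | ipc2 X Y Z => exact IPCDeriv.mp (IPCDeriv.ipc1 _ A) (IPCDeriv.ipc2 X Y Z)
  | peirce X Y => exact IPCDeriv.mp (IPCDeriv.ipc1 _ A) (IPCDeriv.peirce X Y)
  | @mp X Y _ _ ih1 ih2 =>
    exact IPCDeriv.mp (IPCDeriv.mp (IPCDeriv.ipc2 A X Y) ih1) ih2

theorem IPCDeriv.cut {Γ : Set IPCFormula} {A B : IPCFormula}
    (h1 : IPCDeriv Γ A) (h2 : IPCDeriv {A} B) : IPCDeriv Γ B := by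
  have : IPCDeriv (∅ : Set IPCFormula) (A ⊃' B) :=
    IPCDeriv.ded (by simpa using h2)
  exact IPCDeriv.mp (this.weaken (Set.empty_subset Γ)) h1


theorem stmt_14 (Q : IPCFormula) (Z : ℕ → IPCFormula) (N : ℕ) :
    IPCDeriv {IPCC Q Z N} (IPCD Q Z N) := by
  induction N with
  | zero => exact IPCDeriv.hyp rfl
  | succ n ih =>
    show IPCDeriv _ ((IPCD Q Z n ⊃' (Z (n+1) ⊃' Q)) ⊃' (Z (n+1) ⊃' Q))
    apply IPCDeriv.ded
    apply IPCDeriv.ded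
    have hz : IPCDeriv (insert (Z (n+1)) (insert (IPCD Q Z n ⊃' (Z (n+1) ⊃' Q))
        {IPCC Q Z (n+1)})) (Z (n+1)) := IPCDeriv.hyp (Or.inl rfl)
    have hc : IPCDeriv (insert (Z (n+1)) (insert (IPCD Q Z n ⊃' (Z (n+1) ⊃' Q))
        {IPCC Q Z (n+1)})) (Z (n+1) ⊃' IPCC Q Z n) :=
      IPCDeriv.hyp (Or.inr (Or.inr rfl))
    have hcn := IPCDeriv.mp hc hz
    have hd := IPCDeriv.cut hcn ih
    have himp : IPCDeriv (insert (Z (n+1)) (insert (IPCD Q Z n ⊃' (Z (n+1) ⊃' Q))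
        {IPCC Q Z (n+1)})) (IPCD Q Z n ⊃' (Z (n+1) ⊃' Q)) :=
      IPCDeriv.hyp (Or.inr (Or.inl rfl))
    exact IPCDeriv.mp (IPCDeriv.mp himp hd) hz
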